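/- Let A be a commutative algebra, Ш⁺(A) = ⊕_{n≥0} A^{⊗n} the shuffle algebra with product ⋄, and Ш(A) = A ⊗ Ш⁺(A) the tensor product algebra. Define R on Ш(A) by R(a₀ ⊗ a) = 1 ⊗ (a₀ ⊗ a) for a ∈ A^{⊗n}, n ≥ 1, and R(a₀ ⊗ μ) = 1 ⊗ (μ a₀) for μ ∈ k. Then R is a Rota–Baxter operator of weight 0 on the commutative algebra Ш(A). -/

import Mathlib

/-- The shuffle of two words, as an element of the free module on words with
coefficients in a commutative ring `R`. -/
noncomputable def shuffleWord {R ι : Type*} [CommRing R] : List ι → List ι → (List ι →₀ R)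
  | [], b => Finsupp.single b 1
  | a, [] => Finsupp.single a 1
  | x :: xs, y :: ys =>
      (shuffleWord xs (y :: ys)).mapDomain (x :: ·) +
      (shuffleWord (x :: xs) ys).mapDomain (y :: ·)
  termination_by a b => a.length + b.length

/-- The product of the algebra `Ш(A) = A ⊗ Ш⁺(A)`, modelled as `List ι →₀ A`
for a basis `ι` of the commutative `k`-algebra `A`: here `a₀ ⊗ u` corresponds to
`Finsupp.single u a₀`, and `(a₀ ⊗ u) ⋅ (b₀ ⊗ v) = (a₀ b₀) ⊗ (u ⋄ v)` where `⋄`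
is the shuffle product. -/
noncomputable def shaMul {A ι : Type*} [CommRing A] (f g : List ι →₀ A) : List ι →₀ A :=
  f.sum fun u x => g.sum fun v y => (x * y) • shuffleWord u v

/-- The Rota–Baxter operator on `Ш(A)`: `R(a₀ ⊗ u) = 1 ⊗ (a₀ ⊗ u)`, i.e. the
element `a₀` of `A` is expanded over the basis `ι` and prepended to the word. -/
noncomputable def shaR {k A ι : Type*} [Field k] [CommRing A] [Algebra k A]
    (bas : Module.Basis ι k A) (f : List ι →₀ A) : List ι →₀ A :=
  f.sum fun u x => (bas.repr x).sum fun i c => Finsupp.single (i :: u) (algebraMap k A c)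

/-! Both sides of the identity are `k`-bilinear in `(x, y)`, and the elements `bas i ⊗ u` form a
`k`-basis of `Ш(A)`, which `R` sends to `1 ⊗ iu`. On basis elements the identity is the recursion
`iu ⋄ jv = i(u ⋄ jv) + j(iu ⋄ v)` of the shuffle product: shuffles have coefficients in the prime
ring, so `R (bas j ⊗ w) = 1 ⊗ jw` for any shuffle `w`, and `R(R(x) y)` and `R(x R(y))` produce
exactly the two terms. -/

section Shuffle

variable {R S ι : Type*} [CommRing R] [CommRing S]

lemma shuffleWord_cons_cons (x y : ι) (xs ys : List ι) :
    (shuffleWord (x :: xs) (y :: ys) : List ι →₀ R) =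
      (shuffleWord xs (y :: ys)).mapDomain (x :: ·) +
        (shuffleWord (x :: xs) ys).mapDomain (y :: ·) := by
  rw [shuffleWord]

lemma mapRange_shuffleWord (φ : R →+* S) (u v : List ι) :
    (shuffleWord u v : List ι →₀ R).mapRange φ φ.map_zero = shuffleWord u v := by
  induction u, v using shuffleWord.induct with
  | case1 v => simp [shuffleWord]
  | case2 u hu =>
    cases u with
    | nil => exact absurd rfl hu
    | cons x xs => simp [shuffleWord]
  | case3 x xs y ys ih₁ ih₂ =>
    rw [shuffleWord_cons_cons, shuffleWord_cons_cons, ← ih₁, ← ih₂,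
      Finsupp.mapRange_add (map_add φ), Finsupp.mapDomain_mapRange _ _ _ _ (map_add φ),
      Finsupp.mapDomain_mapRange _ _ _ _ (map_add φ)]

end Shuffle

section ShaMul

variable {S A ι : Type*} [CommSemiring S] [CommRing A] [Algebra S A]

lemma shaMul_single_single (u v : List ι) (x y : A) :
    shaMul (Finsupp.single u x) (Finsupp.single v y) = (x * y) • shuffleWord u v := by
  simp [shaMul]

lemma shaMul_add_left (f f' g : List ι →₀ A) :
    shaMul (f + f') g = shaMul f g + shaMul f' g := by
  unfold shaMul
  rw [Finsupp.sum_add_index' (by simp)]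
  intro u x x'
  rw [← Finsupp.sum_add]
  simp only [add_mul, add_smul]

lemma shaMul_add_right (f g g' : List ι →₀ A) :
    shaMul f (g + g') = shaMul f g + shaMul f g' := by
  unfold shaMul
  rw [← Finsupp.sum_add]
  refine Finsupp.sum_congr fun u _ => Finsupp.sum_add_index' (by simp) fun v y y' => ?_
  rw [mul_add, add_smul]

lemma shaMul_smul_left (c : S) (f g : List ι →₀ A) :
    shaMul (c • f) g = c • shaMul f g := by
  unfold shaMul
  rw [Finsupp.sum_smul_index' (by simp), Finsupp.smul_sum]
  refine Finsupp.sum_congr fun u _ => ?_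
  rw [Finsupp.smul_sum]
  exact Finsupp.sum_congr fun v _ => by rw [smul_mul_assoc, smul_assoc]

lemma shaMul_smul_right (c : S) (f g : List ι →₀ A) :
    shaMul f (c • g) = c • shaMul f g := by
  unfold shaMul
  rw [Finsupp.smul_sum]
  refine Finsupp.sum_congr fun u _ => ?_
  rw [Finsupp.sum_smul_index' (by simp), Finsupp.smul_sum]
  exact Finsupp.sum_congr fun v _ => by rw [mul_smul_comm, smul_assoc]

variable (S) in
noncomputable def shaMulBilin : (List ι →₀ A) →ₗ[S] (List ι →₀ A) →ₗ[S] (List ι →₀ A) :=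
  LinearMap.mk₂ S shaMul shaMul_add_left shaMul_smul_left shaMul_add_right shaMul_smul_right

@[simp]
lemma shaMulBilin_apply (f g : List ι →₀ A) : shaMulBilin S f g = shaMul f g :=
  rfl

end ShaMul

section ShaR

variable {k A ι : Type*} [Field k] [CommRing A] [Algebra k A] (bas : Module.Basis ι k A)

lemma shaR_add (f g : List ι →₀ A) : shaR bas (f + g) = shaR bas f + shaR bas g := by
  unfold shaR
  refine Finsupp.sum_add_index' (by simp) fun u x x' => ?_
  rw [map_add, Finsupp.sum_add_index' (by simp) (by simp)]

lemma shaR_smul (c : k) (f : List ι →₀ A) : shaR bas (c • f) = c • shaR bas f := by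
  unfold shaR
  rw [Finsupp.sum_smul_index' (by simp), Finsupp.smul_sum]
  refine Finsupp.sum_congr fun u _ => ?_
  rw [map_smul, Finsupp.sum_smul_index' (by simp), Finsupp.smul_sum]
  refine Finsupp.sum_congr fun i _ => ?_
  rw [Finsupp.smul_single, smul_eq_mul, map_mul, Algebra.smul_def]

noncomputable def shaRLinear : (List ι →₀ A) →ₗ[k] (List ι →₀ A) where
  toFun := shaR bas
  map_add' := shaR_add bas
  map_smul' := shaR_smul bas

@[simp]
lemma shaRLinear_apply (f : List ι →₀ A) : shaRLinear bas f = shaR bas f :=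
  rfl

lemma shaR_single_basis (u : List ι) (i : ι) :
    shaR bas (Finsupp.single u (bas i)) = Finsupp.single (i :: u) 1 := by
  simp [shaR]

lemma shaR_basis_smul_mapRange (j : ι) (h : List ι →₀ k) :
    shaR bas (bas j • h.mapRange (algebraMap k A) (map_zero _)) =
      (h.mapRange (algebraMap k A) (map_zero _)).mapDomain (j :: ·) := by
  induction h using Finsupp.induction_linear with
  | zero => simp [shaR]
  | add g h hg hh =>
    rw [Finsupp.mapRange_add (map_add _), smul_add, shaR_add, hg, hh, Finsupp.mapDomain_add]
  | single w c =>
    rw [Finsupp.mapRange_single, Finsupp.smul_single, Finsupp.mapDomain_single, smul_eq_mul,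
      ← Algebra.commutes, ← Algebra.smul_def]
    simp [shaR]

lemma shaR_rotaBaxter_single_basis (u v : List ι) (i j : ι) :
    shaMul (shaR bas (Finsupp.single u (bas i))) (shaR bas (Finsupp.single v (bas j))) =
      shaR bas (shaMul (shaR bas (Finsupp.single u (bas i))) (Finsupp.single v (bas j)) +
        shaMul (Finsupp.single u (bas i)) (shaR bas (Finsupp.single v (bas j)))) := by
  simp only [shaR_single_basis, shaMul_single_single, one_mul, mul_one, one_smul]
  rw [shuffleWord_cons_cons, shaR_add, ← mapRange_shuffleWord (algebraMap k A) (i :: u) v,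
    ← mapRange_shuffleWord (algebraMap k A) u (j :: v), shaR_basis_smul_mapRange,
    shaR_basis_smul_mapRange, mapRange_shuffleWord, mapRange_shuffleWord, add_comm]

end ShaR

/-- The operator `R(a₀ ⊗ a) = 1 ⊗ a₀ ⊗ a` is a Rota–Baxter operator of weight 0
on the commutative algebra `Ш(A) = A ⊗ Ш⁺(A)`. -/
theorem shaR_is_RB_weight_zero {k A ι : Type*} [Field k] [CommRing A] [Algebra k A]
    (bas : Module.Basis ι k A) :
    ∀ x y : List ι →₀ A,
      shaMul (shaR bas x) (shaR bas y) =
        shaR bas (shaMul (shaR bas x) y + shaMul x (shaR bas y)) := by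
  let B : (List ι →₀ A) →ₗ[k] (List ι →₀ A) →ₗ[k] (List ι →₀ A) := shaMulBilin k
  let R := shaRLinear bas
  have key : B.compl₁₂ R R = (B.compl₁₂ R LinearMap.id + B.compl₁₂ LinearMap.id R).compr₂ R :=
    LinearMap.ext_basis (Finsupp.basis fun _ => bas) (Finsupp.basis fun _ => bas)
      fun ⟨u, i⟩ ⟨v, j⟩ => by simpa [B, R] using shaR_rotaBaxter_single_basis bas u v i j
  exact LinearMap.congr_fun₂ key
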